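/- Let E be a real Banach space and let S : ℝ → E →L[ℝ] E be a strongly continuous linear semigroup: S 0 = id, S (s + t) = S s ∘ S t for all s, t ≥ 0, and t ↦ S t x is continuous for each x ∈ E. Assume there are M ≥ 1 and γ₀ > 0 with ‖S t x‖ ≤ M · Real.exp(−γ₀ t) · ‖x‖ for all t ≥ 0 and x ∈ E. Let N : E → E satisfy N 0 = 0 and ‖N u − N v‖ ≤ C (‖u‖ + ‖v‖) ‖u − v‖ for all u, v ∈ E, where C > 0. Then there exist r > 0 and γ̃ with 0 < γ̃ < γ₀ such that every continuous function z : ℝ → E with ‖z 0‖ ≤ r satisfying the mild (variation-of-parameters) equation z t = S t (z 0) + ∫₀ᵗ S (t − s) (N (z s)) ds for all t ≥ 0 obeys ‖z t‖ ≤ M · Real.exp(−γ̃ t) · ‖z 0‖ for all t ≥ 0. -/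
import Mathlib

open MeasureTheory intervalIntegral

open Set Filter in
private lemma continuousOn_semigroup_apply
    {E : Type*} [NormedAddCommGroup E] [NormedSpace ℝ E]
    (S : ℝ → E →L[ℝ] E) (M : ℝ)
    (hb : ∀ u : ℝ, 0 ≤ u → ∀ x : E, ‖S u x‖ ≤ M * ‖x‖)
    (hScont : ∀ x : E, Continuous fun t => S t x)
    (w : ℝ → E) (hw : Continuous w) (t : ℝ) :
    ContinuousOn (fun s => S (t - s) (w s)) (Set.Icc 0 t) := by
  intro s₀ _
  have h1 : Tendsto (fun s => S (t - s) (w s₀)) (nhdsWithin s₀ (Set.Icc 0 t))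
      (nhds (S (t - s₀) (w s₀))) :=
    (((hScont (w s₀)).tendsto (t - s₀)).comp
      (((continuous_const.sub continuous_id').tendsto s₀).mono_left nhdsWithin_le_nhds))
  have h2 : Tendsto (fun s => S (t - s) (w s) - S (t - s) (w s₀))
      (nhdsWithin s₀ (Set.Icc 0 t)) (nhds 0) := by
    apply squeeze_zero_norm' (a := fun s => M * ‖w s - w s₀‖)
    · filter_upwards [self_mem_nhdsWithin] with s hs
      have hts : (0:ℝ) ≤ t - s := by have := hs.2; linarith
      calc ‖S (t - s) (w s) - S (t - s) (w s₀)‖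
          = ‖S (t - s) (w s - w s₀)‖ := by rw [map_sub]
        _ ≤ M * ‖w s - w s₀‖ := hb _ hts _
    · have h := (tendsto_const_nhds (x := M)).mul
        (((hw.tendsto s₀).sub (tendsto_const_nhds (x := w s₀))).norm)
      simp only [sub_self, norm_zero, mul_zero] at h
      exact h.mono_left nhdsWithin_le_nhds
  have h3 := h2.add h1
  rw [zero_add] at h3
  have : (fun s => S (t - s) (w s))
      = fun s => (S (t - s) (w s) - S (t - s) (w s₀)) + S (t - s) (w s₀) := by
    funext s; abel
  have h4 : Tendsto (fun s => S (t - s) (w s)) (nhdsWithin s₀ (Set.Icc 0 t))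
      (nhds (S (t - s₀) (w s₀))) := by rw [this]; exact h3
  exact h4

/-- local exponential decay for mild solutions of a semilinear equation driven
by a uniformly exponentially stable strongly continuous linear semigroup, with a
quadratically Lipschitz nonlinearity. -/
theorem local_exponential_decay_of_mild_solutions
    {E : Type*} [NormedAddCommGroup E] [NormedSpace ℝ E] [CompleteSpace E]
    (S : ℝ → E →L[ℝ] E)
    (hS0 : S 0 = ContinuousLinearMap.id ℝ E)
    (hSadd : ∀ s t : ℝ, 0 ≤ s → 0 ≤ t → S (s + t) = (S s).comp (S t))
    (hScont : ∀ x : E, Continuous fun t => S t x)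
    (M γ₀ : ℝ) (hM : 1 ≤ M) (hγ₀ : 0 < γ₀)
    (hdecay : ∀ t : ℝ, 0 ≤ t → ∀ x : E, ‖S t x‖ ≤ M * Real.exp (-γ₀ * t) * ‖x‖)
    (C : ℝ) (hC : 0 < C) (N : E → E) (hN0 : N 0 = 0)
    (hN : ∀ u v : E, ‖N u - N v‖ ≤ C * (‖u‖ + ‖v‖) * ‖u - v‖) :
    ∃ r > 0, ∃ γ' : ℝ, 0 < γ' ∧ γ' < γ₀ ∧
      ∀ z : ℝ → E, Continuous z → ‖z 0‖ ≤ r →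
        (∀ t : ℝ, 0 ≤ t → z t = S t (z 0) + ∫ s in (0 : ℝ)..t, S (t - s) (N (z s))) →
        ∀ t : ℝ, 0 ≤ t → ‖z t‖ ≤ M * Real.exp (-γ' * t) * ‖z 0‖ := by
  have hM0 : (0:ℝ) < M := lt_of_lt_of_le one_pos hM
  set ρ : ℝ := γ₀ / (2 * M * C) with hρdef
  have hρ : 0 < ρ := by positivity
  refine ⟨ρ / (2 * M), by positivity, γ₀ / 2, by positivity, by linarith, ?_⟩
  intro z hz hz0 hmild
  -- continuity of N
  have hNcont : Continuous N := by
    rw [continuous_iff_continuousAt]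
    intro u₀
    rw [ContinuousAt, tendsto_iff_norm_sub_tendsto_zero]
    apply squeeze_zero (fun u => norm_nonneg _) (fun u => hN u u₀)
    have h := ((tendsto_const_nhds (x := C)).mul
        (((continuous_norm.tendsto u₀).add (tendsto_const_nhds (x := ‖u₀‖))))).mul
        ((continuous_id.sub (continuous_const (y := u₀))).norm.tendsto u₀)
    simpa using h
  -- uniform bound on the semigroup for nonnegative times
  have hbM : ∀ u : ℝ, 0 ≤ u → ∀ x : E, ‖S u x‖ ≤ M * ‖x‖ := by
    intro u hu x
    have hexp : Real.exp (-γ₀ * u) ≤ 1 :=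
      Real.exp_le_one_iff.mpr (by nlinarith)
    calc ‖S u x‖ ≤ M * Real.exp (-γ₀ * u) * ‖x‖ := hdecay u hu x
      _ ≤ M * 1 * ‖x‖ := by
          have := mul_le_mul_of_nonneg_left hexp hM0.le
          exact mul_le_mul_of_nonneg_right this (norm_nonneg _)
      _ = M * ‖x‖ := by ring
  -- quadratic bound on N
  have hNq : ∀ u : E, ‖N u‖ ≤ C * ‖u‖ * ‖u‖ := by
    intro u
    have h := hN u 0
    rw [hN0] at h
    simpa using h
  -- the weighted norm and its primitive
  set f : ℝ → ℝ := fun s => Real.exp (γ₀ * s) * ‖z s‖ with hfdef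
  have hfcont : Continuous f :=
    (Real.continuous_exp.comp (continuous_const.mul continuous_id')).mul hz.norm
  have hfnn : ∀ s, 0 ≤ f s := fun s => mul_nonneg (Real.exp_pos _).le (norm_nonneg _)
  set G : ℝ → ℝ := fun u => ∫ s in (0:ℝ)..u, f s with hGdef
  have hGcont : Continuous G :=
    intervalIntegral.continuous_primitive (fun a b => hfcont.intervalIntegrable a b) 0
  have hGnn : ∀ t, 0 ≤ t → 0 ≤ G t := fun t ht =>
    intervalIntegral.integral_nonneg ht (fun s _ => hfnn s)
  set K : ℝ := γ₀ / 2 with hKdef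
  have hK : 0 < K := by positivity
  have hKρ : M * (C * ρ) = K := by
    rw [hρdef, hKdef]; field_simp
  set ε : ℝ := M * ‖z 0‖ with hεdef
  have hεnn : 0 ≤ ε := mul_nonneg hM0.le (norm_nonneg _)
  -- Key Grönwall estimate
  have key : ∀ T : ℝ, 0 ≤ T → (∀ s ∈ Set.Icc (0:ℝ) T, ‖z s‖ ≤ ρ) →
      ‖z T‖ ≤ M * Real.exp (-(γ₀ / 2) * T) * ‖z 0‖ := by
    intro T hT hbnd
    have stepB : ∀ t ∈ Set.Icc (0:ℝ) T, f t ≤ ε + K * G t := by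
      intro t ht
      obtain ⟨ht0, htT⟩ := ht
      have hcontInt : ContinuousOn (fun s => S (t - s) (N (z s))) (Set.Icc 0 t) :=
        continuousOn_semigroup_apply S M hbM hScont _ (hNcont.comp hz) t
      have hint1 : IntervalIntegrable (fun s => ‖S (t - s) (N (z s))‖) volume 0 t := by
        apply ContinuousOn.intervalIntegrable
        rw [Set.uIcc_of_le ht0]
        exact hcontInt.norm
      have hint2 : IntervalIntegrable
          (fun s => M * Real.exp (-γ₀ * (t - s)) * (C * ρ * ‖z s‖)) volume 0 t := by
        apply Continuous.intervalIntegrable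
        exact (continuous_const.mul (Real.continuous_exp.comp
          (continuous_const.mul (continuous_const.sub continuous_id')))).mul
          (continuous_const.mul hz.norm)
      have hA : ‖z t‖ ≤ M * Real.exp (-γ₀ * t) * ‖z 0‖ +
          ∫ s in (0:ℝ)..t, M * Real.exp (-γ₀ * (t - s)) * (C * ρ * ‖z s‖) := by
        rw [hmild t ht0]
        refine le_trans (norm_add_le _ _) (add_le_add (hdecay t ht0 _) ?_)
        refine le_trans (intervalIntegral.norm_integral_le_integral_norm ht0) ?_
        refine intervalIntegral.integral_mono_on ht0 hint1 hint2 ?_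
        intro s hs
        have hts : (0:ℝ) ≤ t - s := by linarith [hs.2]
        have hzs : ‖z s‖ ≤ ρ := hbnd s ⟨hs.1, le_trans hs.2 htT⟩
        have hNz : ‖N (z s)‖ ≤ C * ρ * ‖z s‖ := by
          calc ‖N (z s)‖ ≤ C * ‖z s‖ * ‖z s‖ := hNq (z s)
            _ ≤ C * ρ * ‖z s‖ := by
                apply mul_le_mul_of_nonneg_right _ (norm_nonneg _)
                exact mul_le_mul_of_nonneg_left hzs hC.le
        calc ‖S (t - s) (N (z s))‖
            ≤ M * Real.exp (-γ₀ * (t - s)) * ‖N (z s)‖ := hdecay _ hts _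
          _ ≤ M * Real.exp (-γ₀ * (t - s)) * (C * ρ * ‖z s‖) := by
              apply mul_le_mul_of_nonneg_left hNz
              positivity
      have hmul : Real.exp (γ₀ * t) * (M * Real.exp (-γ₀ * t) * ‖z 0‖ +
          ∫ s in (0:ℝ)..t, M * Real.exp (-γ₀ * (t - s)) * (C * ρ * ‖z s‖))
          = ε + K * G t := by
        have h1 : ∀ s ∈ Set.uIcc (0:ℝ) t,
            Real.exp (γ₀ * t) * (M * Real.exp (-γ₀ * (t - s)) * (C * ρ * ‖z s‖)) = K * f s := by
          intro s _
          have he : Real.exp (γ₀ * t) * Real.exp (-γ₀ * (t - s)) = Real.exp (γ₀ * s) := by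
            rw [← Real.exp_add]; congr 1; ring
          calc Real.exp (γ₀ * t) * (M * Real.exp (-γ₀ * (t - s)) * (C * ρ * ‖z s‖))
              = (Real.exp (γ₀ * t) * Real.exp (-γ₀ * (t - s))) * (M * (C * ρ) * ‖z s‖) := by
                ring
            _ = Real.exp (γ₀ * s) * (K * ‖z s‖) := by rw [he, hKρ]
            _ = K * f s := by rw [hfdef]; ring
        have e1 : Real.exp (γ₀ * t) * Real.exp (-γ₀ * t) = 1 := by
          rw [← Real.exp_add]
          norm_num
        rw [mul_add, ← intervalIntegral.integral_const_mul,
          intervalIntegral.integral_congr h1, intervalIntegral.integral_const_mul]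
        have h2 : Real.exp (γ₀ * t) * (M * Real.exp (-γ₀ * t) * ‖z 0‖) = ε := by
          calc Real.exp (γ₀ * t) * (M * Real.exp (-γ₀ * t) * ‖z 0‖)
              = (Real.exp (γ₀ * t) * Real.exp (-γ₀ * t)) * (M * ‖z 0‖) := by ring
            _ = ε := by rw [e1, one_mul, hεdef]
        rw [h2, hGdef]
      calc f t = Real.exp (γ₀ * t) * ‖z t‖ := rfl
        _ ≤ Real.exp (γ₀ * t) * (M * Real.exp (-γ₀ * t) * ‖z 0‖ +
            ∫ s in (0:ℝ)..t, M * Real.exp (-γ₀ * (t - s)) * (C * ρ * ‖z s‖)) :=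
          mul_le_mul_of_nonneg_left hA (Real.exp_pos _).le
        _ = ε + K * G t := hmul
    -- Grönwall inequality for G
    have hgron := norm_le_gronwallBound_of_norm_deriv_right_le
      (f := G) (f' := f) (δ := 0) (K := K) (ε := ε) (a := 0) (b := T)
      hGcont.continuousOn
      (fun x _ => ((hfcont.integral_hasStrictDerivAt 0 x).hasDerivAt).hasDerivWithinAt)
      (by simp [hGdef])
      (fun x hx => by
        rw [Real.norm_of_nonneg (hfnn x), Real.norm_of_nonneg (hGnn x hx.1)]
        have := stepB x ⟨hx.1, hx.2.le⟩
        linarith)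
    have hGT : G T ≤ ε / K * (Real.exp (K * T) - 1) := by
      have h := hgron T ⟨hT, le_rfl⟩
      rw [gronwallBound_of_K_ne_0 (ne_of_gt hK), Real.norm_of_nonneg (hGnn T hT)] at h
      simpa using h
    have hfT : f T ≤ ε * Real.exp (K * T) := by
      have h2 := stepB T ⟨hT, le_rfl⟩
      have h3 : K * G T ≤ ε * (Real.exp (K * T) - 1) := by
        calc K * G T ≤ K * (ε / K * (Real.exp (K * T) - 1)) :=
              mul_le_mul_of_nonneg_left hGT hK.le
          _ = ε * (Real.exp (K * T) - 1) := by field_simp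
      have h4 : ε + ε * (Real.exp (K * T) - 1) = ε * Real.exp (K * T) := by ring
      linarith
    have hzT : ‖z T‖ = Real.exp (-(γ₀ * T)) * f T := by
      rw [hfdef]
      calc ‖z T‖ = (Real.exp (-(γ₀ * T)) * Real.exp (γ₀ * T)) * ‖z T‖ := by
            rw [← Real.exp_add]; norm_num
        _ = Real.exp (-(γ₀ * T)) * (Real.exp (γ₀ * T) * ‖z T‖) := by ring
    rw [hzT]
    calc Real.exp (-(γ₀ * T)) * f T ≤ Real.exp (-(γ₀ * T)) * (ε * Real.exp (K * T)) :=
          mul_le_mul_of_nonneg_left hfT (Real.exp_pos _).le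
      _ = M * Real.exp (-(γ₀ / 2) * T) * ‖z 0‖ := by
          have he : Real.exp (-(γ₀ * T)) * Real.exp (K * T) = Real.exp (-(γ₀ / 2) * T) := by
            rw [← Real.exp_add]; congr 1; rw [hKdef]; ring
          calc Real.exp (-(γ₀ * T)) * (ε * Real.exp (K * T))
              = (Real.exp (-(γ₀ * T)) * Real.exp (K * T)) * ε := by ring
            _ = Real.exp (-(γ₀ / 2) * T) * ε := by rw [he]
            _ = M * Real.exp (-(γ₀ / 2) * T) * ‖z 0‖ := by rw [hεdef]; ring
  -- initial datum is strictly inside the ball of radius ρ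
  have hz0ρ : ‖z 0‖ < ρ := lt_of_le_of_lt hz0 (div_lt_self hρ (by linarith))
  have hz0half : ‖z 0‖ ≤ ρ / (2 * M) := hz0
  -- continuation argument: the solution stays in the ball of radius ρ
  have hbound : ∀ t : ℝ, 0 ≤ t → ‖z t‖ ≤ ρ := by
    by_contra hcon
    push_neg at hcon
    obtain ⟨t₁, ht₁, ht₁'⟩ := hcon
    set B : Set ℝ := {t | 0 ≤ t ∧ ρ < ‖z t‖} with hBdef
    have hBne : B.Nonempty := ⟨t₁, ht₁, ht₁'⟩
    have hBbd : BddBelow B := ⟨0, fun t ht => ht.1⟩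
    set τ := sInf B with hτdef
    have hτ0 : 0 ≤ τ := le_csInf hBne (fun t ht => ht.1)
    have hτle : ∀ s, 0 ≤ s → s < τ → ‖z s‖ ≤ ρ := by
      intro s hs hsτ
      by_contra h
      push_neg at h
      exact absurd (csInf_le hBbd ⟨hs, h⟩) (not_le.mpr hsτ)
    have hτρ : ρ ≤ ‖z τ‖ := by
      have hτcl : τ ∈ closure B := csInf_mem_closure hBne hBbd
      have hclosed : IsClosed {t : ℝ | ρ ≤ ‖z t‖} := isClosed_le continuous_const hz.norm
      exact (hclosed.closure_subset_iff.mpr (fun t ht => ht.2.le)) hτcl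
    have hτρ' : ‖z τ‖ ≤ ρ := by
      rcases eq_or_lt_of_le hτ0 with h0 | h0
      · rw [← h0]; exact hz0ρ.le
      · refine le_of_tendsto (x := nhdsWithin τ (Set.Iio τ))
          ((hz.norm.tendsto τ).mono_left nhdsWithin_le_nhds) ?_
        filter_upwards [Ioo_mem_nhdsLT_of_mem (Set.mem_Ioc.mpr ⟨h0, le_rfl⟩)] with s hs
        exact hτle s hs.1.le hs.2
    have hall : ∀ s ∈ Set.Icc (0:ℝ) τ, ‖z s‖ ≤ ρ := by
      intro s hs
      rcases lt_or_eq_of_le hs.2 with h | h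
      · exact hτle s hs.1 h
      · rw [h]; exact hτρ'
    have hkeyτ := key τ hτ0 hall
    have hexp : Real.exp (-(γ₀ / 2) * τ) ≤ 1 :=
      Real.exp_le_one_iff.mpr (by nlinarith)
    have h5 : M * Real.exp (-(γ₀ / 2) * τ) * ‖z 0‖ ≤ M * ‖z 0‖ := by
      calc M * Real.exp (-(γ₀ / 2) * τ) * ‖z 0‖ ≤ M * 1 * ‖z 0‖ := by
            apply mul_le_mul_of_nonneg_right _ (norm_nonneg _)
            exact mul_le_mul_of_nonneg_left hexp hM0.le
        _ = M * ‖z 0‖ := by ring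
    have h6 : M * ‖z 0‖ ≤ ρ / 2 := by
      calc M * ‖z 0‖ ≤ M * (ρ / (2 * M)) := mul_le_mul_of_nonneg_left hz0half hM0.le
        _ = ρ / 2 := by field_simp
    linarith
  intro t ht
  exact key t ht (fun s hs => hbound s hs.1)
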